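/- Suppose the graph G = (V, E) is connected, Q ∈ ℝ^{|E|×|V|} is its oriented incidence matrix, and T = {τ_1, …, τ_d} is a row covering of Q in which every block τ_i induces a path subgraph of G, with M = max_i |τ_i| and r the minimum number of blocks containing any single edge. Then the block gossip method with blocks determined by T satisfies E‖c_k − c*‖² ≤ (1 − r·α(G)/((2 − 2cos(Mπ/(M+1))) d))^k ‖c − c*‖² ≤ (1 − r·α(G)/(4d))^k ‖c − c*‖², where c is the initial vector of node values, c* = mean(c)·1, and α(G) is the algebraic connectivity of G. -/

import Mathlib

open Matrix

noncomputable section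

open Classical in

/-- The Moore–Penrose pseudoinverse of a real matrix, defined via the four Penrose
conditions (which always admit a unique solution). -/
def mpinv {m n : Type*} [Fintype m] [Fintype n] (A : Matrix m n ℝ) : Matrix n m ℝ :=
  if h : ∃ B : Matrix n m ℝ,
      A * B * A = A ∧ B * A * B = B ∧ (A * B)ᵀ = A * B ∧ (B * A)ᵀ = B * A
  then h.choose else 0

/-- Smallest nonzero eigenvalue of a square real matrix. -/
def lambdaMinPos {k : Type*} [Fintype k] [DecidableEq k] (M : Matrix k k ℝ) : ℝ :=
  sInf {μ : ℝ | μ ≠ 0 ∧ μ ∈ spectrum ℝ M}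

/-- Largest eigenvalue of a square real matrix. -/
def lambdaMax {k : Type*} [Fintype k] [DecidableEq k] (M : Matrix k k ℝ) : ℝ :=
  sSup (spectrum ℝ M)

/-- Squared Euclidean norm of a vector. -/
def sqNorm {k : Type*} [Fintype k] (v : k → ℝ) : ℝ := ∑ i, (v i) ^ 2

/-- The row submatrix of `A` with rows indexed by the subset `τ`. -/
def rowSub {ι κ : Type*} (A : Matrix ι κ ℝ) (τ : Finset ι) : Matrix τ κ ℝ :=
  Matrix.of fun i j => A i.1 j

/-- `T = (τ_1, …, τ_d)` is a `(d, a, β, r, R)` row covering of `A`: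
the blocks cover all row indices, `a` lower-bounds the smallest nonzero eigenvalue and `β`
upper-bounds the largest eigenvalue of each `A_τ A_τᵀ`, and `r` (resp. `R`) is the minimum
(resp. maximum) number of blocks containing any single row. -/
structure IsRowCovering {ι κ : Type*} [Fintype ι] [DecidableEq ι] [Fintype κ] {d : ℕ}
    (A : Matrix ι κ ℝ) (τ : Fin d → Finset ι) (a β : ℝ) (r R : ℕ) : Prop where
  cover : ∀ i : ι, ∃ l, i ∈ τ l
  alpha_le : ∀ l, a ≤ lambdaMinPos (rowSub A (τ l) * (rowSub A (τ l))ᵀ)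
  le_beta : ∀ l, lambdaMax (rowSub A (τ l) * (rowSub A (τ l))ᵀ) ≤ β
  r_le : ∀ i : ι, r ≤ (Finset.univ.filter fun l => i ∈ τ l).card
  r_attained : ∃ i : ι, (Finset.univ.filter fun l => i ∈ τ l).card = r
  le_R : ∀ i : ι, (Finset.univ.filter fun l => i ∈ τ l).card ≤ R
  R_attained : ∃ i : ι, (Finset.univ.filter fun l => i ∈ τ l).card = R

/-- One step of the block Kaczmarz method with block `τ`:
`x ↦ x + A_τ† (b_τ − A_τ x)`. -/
def kaczStep {ι κ : Type*} [Fintype ι] [Fintype κ] (A : Matrix ι κ ℝ) (b : ι → ℝ)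
    (τ : Finset ι) (x : κ → ℝ) : κ → ℝ :=
  x + (mpinv (rowSub A τ)).mulVec (fun i : τ => b i.1 - (rowSub A τ).mulVec x i)

/-- The iterates of the block (randomized) Kaczmarz method, as a function of the sequence
`σ` of block choices: `x_k = x_{k-1} + A_τ† (b_τ − A_τ x_{k-1})` with `τ = τs (σ k)`. -/
def kaczIter {ι κ : Type*} [Fintype ι] [Fintype κ] {d : ℕ} (A : Matrix ι κ ℝ) (b : ι → ℝ)
    (τs : Fin d → Finset ι) (x0 : κ → ℝ) : ∀ k : ℕ, (Fin k → Fin d) → κ → ℝ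
  | 0, _ => x0
  | (k + 1), σ => kaczStep A b (τs (σ (Fin.last k))) (kaczIter A b τs x0 k (σ ∘ Fin.castSucc))

/-- `Q` is an oriented incidence matrix of the graph `G`, with `hd e` and `tl e` the head
and tail of the (arbitrary) orientation of the edge indexed by the row `e`: the rows of
`Q` are in bijection with the edges of `G`, and the row of edge `{i, j}` has entry `+1`
in column `i`, `−1` in column `j`, and `0` elsewhere. -/
def IsOrientedIncidence {V E : Type*} [DecidableEq V] (G : SimpleGraph V)
    (hd tl : E → V) (Q : Matrix E V ℝ) : Prop :=
  (∀ e, G.Adj (hd e) (tl e)) ∧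
  (∀ a b : V, G.Adj a b → ∃! e : E, s(hd e, tl e) = s(a, b)) ∧
  (∀ e v, Q e v = if v = hd e then 1 else if v = tl e then -1 else 0)

/-- The set of vertices incident to some edge of the block `τ`. -/
def endpts {V E : Type*} [DecidableEq V] (hd tl : E → V) (τ : Finset E) : Finset V :=
  τ.biUnion fun e => {hd e, tl e}

/-- The edge-induced subgraph determined by the block `τ` is connected: any two of
its vertices are joined by a walk using only edges of `τ`. -/
def IsConnectedBlock {V E : Type*} [DecidableEq V] (hd tl : E → V) (τ : Finset E) : Prop :=
  ∀ a ∈ endpts hd tl τ, ∀ b ∈ endpts hd tl τ,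
    (SimpleGraph.fromEdgeSet {p : Sym2 V | ∃ e ∈ τ, s(hd e, tl e) = p}).Reachable a b

/-- The edge-induced subgraph of the block `τ` is a path: there are distinct vertices
`v_0, …, v_k` such that the edges of `τ` are exactly the consecutive pairs
`{v_i, v_{i+1}}`, each appearing once. -/
def IsPathBlock {V E : Type*} (hd tl : E → V) (τ : Finset E) : Prop :=
  ∃ (k : ℕ) (v : Fin (k + 1) → V) (φ : Fin k → E),
    Function.Injective v ∧ Function.Injective φ ∧
    (∀ e : E, e ∈ τ ↔ ∃ i, φ i = e) ∧
    ∀ i : Fin k, s(hd (φ i), tl (φ i)) = s(v i.castSucc, v i.succ)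

/-!
A gossip step `x ↦ x - A_τ† A_τ x` is the orthogonal projection onto `ker A_τ`, so it lowers the
squared error `‖y‖²`, `y = x - c*`, by `‖A_τ† A_τ y‖²`, which is at least `‖A_τ y‖² / β` when `β`
bounds the quadratic form of `A_τ`. Summed over the blocks, every edge is counted at least `r`
times, giving a decrease of at least `r ‖Q y‖² / β ≥ r α(G) ‖y‖² / β`: the error keeps mean zero,
i.e. stays orthogonal to the constants, which span `ker Q` since `G` is connected.

For a path block with `k ≤ M` edges, `A_τ` is the incidence matrix of a path: its rows are
independent, and `Σ (x_i - x_{i+1})² ≤ (2 + 2 cos (π / (k + 1))) Σ x_i²` by weighted AM–GM, with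
the weights taken from the Perron vector `sin ((j + 1/2) π / (k + 1))` of the path.
-/

open Finset Real

lemma dotProduct_self_nonneg {k : Type*} [Fintype k] (v : k → ℝ) : 0 ≤ v ⬝ᵥ v :=
  sum_nonneg fun i _ => mul_self_nonneg (v i)

lemma sqNorm_eq_dotProduct {k : Type*} [Fintype k] (v : k → ℝ) : sqNorm v = v ⬝ᵥ v := by
  simp [sqNorm, dotProduct, sq]

section Pseudoinverse

variable {m n : Type*} [Fintype m] [Fintype n]

lemma exists_penrose_of_injective_vecMul {A : Matrix m n ℝ}
    (hA : Function.Injective A.vecMul) :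
    ∃ B : Matrix n m ℝ,
      A * B * A = A ∧ B * A * B = B ∧ (A * B)ᵀ = A * B ∧ (B * A)ᵀ = B * A := by
  classical
  have hS : IsUnit (A * Aᵀ) := by
    simpa using (PosDef.mul_conjTranspose_self A hA).isUnit
  have hSS : A * Aᵀ * (A * Aᵀ)⁻¹ = 1 := mul_nonsing_inv _ ((isUnit_iff_isUnit_det _).mp hS)
  have hSt : ((A * Aᵀ)⁻¹)ᵀ = (A * Aᵀ)⁻¹ := by
    rw [transpose_nonsing_inv, transpose_mul, transpose_transpose]
  refine ⟨Aᵀ * (A * Aᵀ)⁻¹, ?_, ?_, ?_, ?_⟩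
  · rw [← Matrix.mul_assoc, hSS, Matrix.one_mul]
  · rw [Matrix.mul_assoc, Matrix.mul_assoc, ← Matrix.mul_assoc A, hSS, Matrix.mul_one]
  · rw [← Matrix.mul_assoc, hSS, transpose_one]
  · rw [transpose_mul, transpose_mul, transpose_transpose, hSt, Matrix.mul_assoc]

lemma mpinv_penrose {A : Matrix m n ℝ}
    (h : ∃ B : Matrix n m ℝ,
      A * B * A = A ∧ B * A * B = B ∧ (A * B)ᵀ = A * B ∧ (B * A)ᵀ = B * A) :
    A * mpinv A * A = A ∧ mpinv A * A * mpinv A = mpinv A ∧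
      (A * mpinv A)ᵀ = A * mpinv A ∧ (mpinv A * A)ᵀ = mpinv A * A := by
  rw [mpinv, dif_pos h]
  exact h.choose_spec

variable {A : Matrix m n ℝ} {B : Matrix n m ℝ}

lemma dotProduct_mul_mulVec_eq_zero (hBA : (B * A)ᵀ = B * A) {z : n → ℝ}
    (hz : A *ᵥ z = 0) (x : n → ℝ) : z ⬝ᵥ (B * A) *ᵥ x = 0 := by
  rw [dotProduct_mulVec, ← mulVec_transpose, hBA, ← mulVec_mulVec, hz, mulVec_zero,
    zero_dotProduct]

lemma dotProduct_sub_mul_mulVec (hABA : A * B * A = A) (hBA : (B * A)ᵀ = B * A)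
    (y : n → ℝ) :
    (y - (B * A) *ᵥ y) ⬝ᵥ (y - (B * A) *ᵥ y) = y ⬝ᵥ y - ((B * A) *ᵥ y) ⬝ᵥ ((B * A) *ᵥ y) := by
  have hP : (B * A) * (B * A) = B * A := by rw [Matrix.mul_assoc, ← Matrix.mul_assoc A, hABA]
  have hPy : ((B * A) *ᵥ y) ⬝ᵥ ((B * A) *ᵥ y) = y ⬝ᵥ (B * A) *ᵥ y := by
    rw [dotProduct_mulVec, ← mulVec_transpose, hBA, mulVec_mulVec, hP, dotProduct_comm]
  rw [sub_dotProduct, dotProduct_sub, dotProduct_sub, dotProduct_comm ((B * A) *ᵥ y) y, hPy]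
  ring

lemma dotProduct_sub_mul_mulVec_le (hABA : A * B * A = A) (hBA : (B * A)ᵀ = B * A)
    {β : ℝ} (hβ : 0 < β) (hAβ : ∀ z, (A *ᵥ z) ⬝ᵥ (A *ᵥ z) ≤ β * (z ⬝ᵥ z)) (y : n → ℝ) :
    (y - (B * A) *ᵥ y) ⬝ᵥ (y - (B * A) *ᵥ y) ≤ y ⬝ᵥ y - (A *ᵥ y) ⬝ᵥ (A *ᵥ y) / β := by
  have hAP : A *ᵥ (B * A) *ᵥ y = A *ᵥ y := by rw [mulVec_mulVec, ← Matrix.mul_assoc, hABA]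
  have h := hAβ ((B * A) *ᵥ y)
  rw [hAP] at h
  rw [dotProduct_sub_mul_mulVec hABA hBA, sub_le_sub_iff_left, div_le_iff₀' hβ]
  exact h

end Pseudoinverse

section Spectral

lemma isHermitian_transpose_mul_self {m n : Type*} [Fintype m] (Q : Matrix m n ℝ) :
    (Qᵀ * Q).IsHermitian := by
  simpa using isHermitian_conjTranspose_mul_self Q

variable {m n : Type*} [Fintype m] [Fintype n] [DecidableEq n]

lemma Matrix.IsHermitian.dotProduct_eq_sum_eigenvectorBasis {A : Matrix n n ℝ}
    (hA : A.IsHermitian) (u v : n → ℝ) :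
    u ⬝ᵥ v = ∑ i, (⇑(hA.eigenvectorBasis i) ⬝ᵥ u) * (⇑(hA.eigenvectorBasis i) ⬝ᵥ v) := by
  simpa [EuclideanSpace.inner_eq_star_dotProduct, dotProduct_comm] using
    (hA.eigenvectorBasis.sum_inner_mul_inner (WithLp.toLp 2 u) (WithLp.toLp 2 v)).symm

lemma lambdaMinPos_transpose_mul_self_nonneg (Q : Matrix m n ℝ) :
    0 ≤ lambdaMinPos (Qᵀ * Q) := by
  refine Real.sInf_nonneg fun μ ⟨_, hμ⟩ => ?_
  obtain ⟨i, rfl⟩ := (isHermitian_transpose_mul_self Q).spectrum_real_eq_range_eigenvalues ▸ hμ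
  simpa using eigenvalues_conjTranspose_mul_self_nonneg Q i

lemma lambdaMinPos_mul_dotProduct_le (Q : Matrix m n ℝ) {y : n → ℝ}
    (hy : ∀ z, Q *ᵥ z = 0 → z ⬝ᵥ y = 0) :
    lambdaMinPos (Qᵀ * Q) * (y ⬝ᵥ y) ≤ (Q *ᵥ y) ⬝ᵥ (Q *ᵥ y) := by
  set L := Qᵀ * Q
  have hL := isHermitian_transpose_mul_self Q
  have hquad : ∀ x, (Q *ᵥ x) ⬝ᵥ (Q *ᵥ x) = x ⬝ᵥ L *ᵥ x := by
    intro x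
    rw [← mulVec_mulVec, dotProduct_mulVec x, vecMul_transpose]
  have hcoef : ∀ i, ⇑(hL.eigenvectorBasis i) ⬝ᵥ L *ᵥ y =
      hL.eigenvalues i * (⇑(hL.eigenvectorBasis i) ⬝ᵥ y) := by
    intro i
    rw [dotProduct_mulVec, ← mulVec_transpose, transpose_mul, transpose_transpose,
      hL.mulVec_eigenvectorBasis, smul_dotProduct, smul_eq_mul]
  have hbdd : BddBelow {μ : ℝ | μ ≠ 0 ∧ μ ∈ spectrum ℝ L} :=
    ((finite_real_spectrum (A := L)).subset fun _ h => h.2).bddBelow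
  rw [hquad, hL.dotProduct_eq_sum_eigenvectorBasis y y,
    hL.dotProduct_eq_sum_eigenvectorBasis y (L *ᵥ y), mul_sum]
  refine sum_le_sum fun i _ => ?_
  rw [hcoef]
  by_cases hi : hL.eigenvalues i = 0
  · have hQb : Q *ᵥ ⇑(hL.eigenvectorBasis i) = 0 := by
      rw [← dotProduct_self_eq_zero, hquad, hL.mulVec_eigenvectorBasis, hi, zero_smul,
        dotProduct_zero]
    rw [hy _ hQb, mul_zero, mul_zero, zero_mul]
  · have hαi : lambdaMinPos L ≤ hL.eigenvalues i :=
      csInf_le hbdd ⟨hi, hL.eigenvalues_mem_spectrum_real i⟩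
    nlinarith [mul_self_nonneg (⇑(hL.eigenvectorBasis i) ⬝ᵥ y)]

end Spectral

section Kaczmarz

lemma rowSub_mulVec_apply {ι κ : Type*} [Fintype κ] (A : Matrix ι κ ℝ) (τ : Finset ι)
    (x : κ → ℝ) (i : τ) : (rowSub A τ *ᵥ x) i = (A *ᵥ x) i :=
  rfl

lemma rowSub_mulVec_eq_zero {ι κ : Type*} [Fintype κ] {A : Matrix ι κ ℝ} {z : κ → ℝ}
    (hz : A *ᵥ z = 0) (τ : Finset ι) : rowSub A τ *ᵥ z = 0 :=
  funext fun i => congrFun hz i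

variable {ι κ : Type*} [Fintype ι] [Fintype κ]

lemma kaczStep_zero (A : Matrix ι κ ℝ) (τ : Finset ι) (x : κ → ℝ) :
    kaczStep A 0 τ x = x - (mpinv (rowSub A τ) * rowSub A τ) *ᵥ x := by
  have h : (fun i : τ => (0 : ι → ℝ) i - (rowSub A τ *ᵥ x) i) = -(rowSub A τ *ᵥ x) := by
    ext i
    simp
  rw [kaczStep, h, mulVec_neg, ← mulVec_mulVec, sub_eq_add_neg]

lemma kaczStep_zero_sub {A : Matrix ι κ ℝ} {z : κ → ℝ} (hz : A *ᵥ z = 0) (τ : Finset ι)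
    (x : κ → ℝ) :
    kaczStep A 0 τ x - z = kaczStep A 0 τ (x - z) := by
  rw [kaczStep_zero, kaczStep_zero, mulVec_sub (mpinv (rowSub A τ) * rowSub A τ),
    ← mulVec_mulVec z, rowSub_mulVec_eq_zero hz, mulVec_zero, sub_zero, sub_right_comm]

lemma dotProduct_kaczStep_zero {A : Matrix ι κ ℝ} {τ : Finset ι}
    (hτ : Function.Injective (rowSub A τ).vecMul) {z : κ → ℝ} (hz : A *ᵥ z = 0)
    (x : κ → ℝ) : z ⬝ᵥ kaczStep A 0 τ x = z ⬝ᵥ x := by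
  rw [kaczStep_zero, dotProduct_sub,
    dotProduct_mul_mulVec_eq_zero (mpinv_penrose (exists_penrose_of_injective_vecMul hτ)).2.2.2
      (rowSub_mulVec_eq_zero hz τ), sub_zero]

variable {d : ℕ}

lemma sum_kaczIter_succ {R : Type*} [AddCommMonoid R] (A : Matrix ι κ ℝ) (b : ι → ℝ)
    (τs : Fin d → Finset ι) (x₀ : κ → ℝ) (f : (κ → ℝ) → R) (k : ℕ) :
    ∑ σ : Fin (k + 1) → Fin d, f (kaczIter A b τs x₀ (k + 1) σ) =
      ∑ σ : Fin k → Fin d, ∑ l, f (kaczStep A b (τs l) (kaczIter A b τs x₀ k σ)) := by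
  rw [← (Fin.snocEquiv fun _ => Fin d).sum_comp, Fintype.sum_prod_type, sum_comm]
  simp [kaczIter, Fin.snocEquiv]

lemma sum_kaczIter_le_pow (A : Matrix ι κ ℝ) (b : ι → ℝ) (τs : Fin d → Finset ι)
    {S : Set (κ → ℝ)} {x₀ : κ → ℝ} (hx₀ : x₀ ∈ S)
    (hS : ∀ l, ∀ x ∈ S, kaczStep A b (τs l) x ∈ S) {f : (κ → ℝ) → ℝ} {ρ : ℝ} (hρ : 0 ≤ ρ)
    (hf : ∀ x ∈ S, ∑ l, f (kaczStep A b (τs l) x) ≤ ρ * f x) (k : ℕ) :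
    ∑ σ : Fin k → Fin d, f (kaczIter A b τs x₀ k σ) ≤ ρ ^ k * f x₀ := by
  have hmem : ∀ k σ, kaczIter A b τs x₀ k σ ∈ S := by
    intro k
    induction k with
    | zero => exact fun _ => hx₀
    | succ k ih => exact fun σ => hS _ _ (ih _)
  induction k with
  | zero => simp [kaczIter]
  | succ k ih =>
    calc ∑ σ : Fin (k + 1) → Fin d, f (kaczIter A b τs x₀ (k + 1) σ)
        ≤ ∑ σ : Fin k → Fin d, ρ * f (kaczIter A b τs x₀ k σ) := by
          rw [sum_kaczIter_succ]
          exact sum_le_sum fun σ _ => hf _ (hmem k σ)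
      _ ≤ ρ ^ (k + 1) * f x₀ := by
          rw [← mul_sum, pow_succ', mul_assoc]
          exact mul_le_mul_of_nonneg_left ih hρ

lemma sum_rowSub_mulVec_dotProduct [DecidableEq ι] (A : Matrix ι κ ℝ) (τs : Fin d → Finset ι)
    (y : κ → ℝ) :
    ∑ l, (rowSub A (τs l) *ᵥ y) ⬝ᵥ (rowSub A (τs l) *ᵥ y) =
      ∑ i, (#{l | i ∈ τs l} : ℝ) * ((A *ᵥ y) i * (A *ᵥ y) i) := by
  have hblock : ∀ l, (rowSub A (τs l) *ᵥ y) ⬝ᵥ (rowSub A (τs l) *ᵥ y) =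
      ∑ i, if i ∈ τs l then (A *ᵥ y) i * (A *ᵥ y) i else 0 := by
    intro l
    rw [← sum_filter, filter_mem_eq_inter, univ_inter, ← sum_coe_sort]
    rfl
  simp only [hblock]
  rw [sum_comm]
  simp [sum_ite]

lemma sum_dotProduct_kaczStep_zero_le [DecidableEq ι] (A : Matrix ι κ ℝ) (τs : Fin d → Finset ι)
    (hτs : ∀ l, Function.Injective (rowSub A (τs l)).vecMul) {β : ℝ} (hβ : 0 < β)
    (hAβ : ∀ l z, (rowSub A (τs l) *ᵥ z) ⬝ᵥ (rowSub A (τs l) *ᵥ z) ≤ β * (z ⬝ᵥ z))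
    {r : ℕ} (hr : ∀ i, r ≤ #{l | i ∈ τs l}) {α : ℝ} {y : κ → ℝ}
    (hy : α * (y ⬝ᵥ y) ≤ (A *ᵥ y) ⬝ᵥ (A *ᵥ y)) :
    ∑ l, kaczStep A 0 (τs l) y ⬝ᵥ kaczStep A 0 (τs l) y ≤ (d - r * α / β) * (y ⬝ᵥ y) := by
  have hcover : r * ((A *ᵥ y) ⬝ᵥ (A *ᵥ y)) ≤
      ∑ l, (rowSub A (τs l) *ᵥ y) ⬝ᵥ (rowSub A (τs l) *ᵥ y) := by
    rw [sum_rowSub_mulVec_dotProduct, dotProduct, mul_sum]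
    exact sum_le_sum fun i _ =>
      mul_le_mul_of_nonneg_right (by exact_mod_cast hr i) (mul_self_nonneg _)
  calc ∑ l, kaczStep A 0 (τs l) y ⬝ᵥ kaczStep A 0 (τs l) y
      ≤ ∑ l, (y ⬝ᵥ y - (rowSub A (τs l) *ᵥ y) ⬝ᵥ (rowSub A (τs l) *ᵥ y) / β) := by
        refine sum_le_sum fun l _ => ?_
        obtain ⟨hABA, -, -, hBA⟩ := mpinv_penrose (exists_penrose_of_injective_vecMul (hτs l))
        rw [kaczStep_zero]
        exact dotProduct_sub_mul_mulVec_le hABA hBA hβ (hAβ l) y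
    _ = d * (y ⬝ᵥ y) - (∑ l, (rowSub A (τs l) *ᵥ y) ⬝ᵥ (rowSub A (τs l) *ᵥ y)) / β := by
        rw [sum_sub_distrib, sum_const, card_univ, Fintype.card_fin, nsmul_eq_mul, sum_div]
    _ ≤ d * (y ⬝ᵥ y) - r * (α * (y ⬝ᵥ y)) / β := by
        gcongr
        exact (mul_le_mul_of_nonneg_left hy (Nat.cast_nonneg r)).trans hcover
    _ = (d - r * α / β) * (y ⬝ᵥ y) := by ring

end Kaczmarz

lemma sub_sq_le_weighted {a b s t : ℝ} (hs : 0 < s) (ht : 0 < t) :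
    (a - b) ^ 2 ≤ (1 + t / s) * a ^ 2 + (1 + s / t) * b ^ 2 := by
  have hsos : (1 + t / s) * a ^ 2 + (1 + s / t) * b ^ 2 - (a - b) ^ 2 =
      (t * a + s * b) ^ 2 / (s * t) := by
    field_simp
    ring
  have : 0 ≤ (t * a + s * b) ^ 2 / (s * t) := by positivity
  linarith

lemma sum_range_weighted_sq_eq {u x : ℕ → ℝ} {c : ℝ} (h0 : u 1 = (2 * c + 1) * u 0)
    (hrec : ∀ j, u (j + 2) + u j = 2 * c * u (j + 1)) (n : ℕ) (hu : ∀ j ≤ n + 1, u j ≠ 0) :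
    ∑ i ∈ range (n + 1),
        ((1 + u (i + 1) / u i) * x i ^ 2 + (1 + u i / u (i + 1)) * x (i + 1) ^ 2) =
      (2 + 2 * c) * ∑ i ∈ range (n + 1), x i ^ 2 + (1 + u n / u (n + 1)) * x (n + 1) ^ 2 := by
  induction n with
  | zero =>
    have hu₀ := hu 0 (by omega)
    simp only [zero_add, sum_range_one, h0]
    field_simp
    ring
  | succ n ih =>
    rw [sum_range_succ, ih fun j hj => hu j (by omega),
      sum_range_succ (fun i => x i ^ 2) (n + 1)]
    have hn1 := hu (n + 1) (by omega)
    have hn2 := hu (n + 2) (by omega)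
    rw [show u (n + 1 + 1) = 2 * c * u (n + 1) - u n by linarith [hrec n]] at *
    field_simp
    ring

-- `u j = sin ((j + 1/2) π / (n + 2))`, the Perron vector of the path on `n + 2` vertices; the
-- boundary identities are the recurrence continued by `u (-1) = -u 0` and `u (n + 2) = -u (n + 1)`.
lemma exists_path_weights (n : ℕ) :
    ∃ u : ℕ → ℝ, (∀ j ≤ n + 1, 0 < u j) ∧ u 1 = (2 * cos (π / (n + 2)) + 1) * u 0 ∧
      (∀ j, u (j + 2) + u j = 2 * cos (π / (n + 2)) * u (j + 1)) ∧
      u n = (2 * cos (π / (n + 2)) + 1) * u (n + 1) := by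
  set φ := π / (n + 2)
  have hφ : 0 < φ := by positivity
  have hnφ : ((n : ℝ) + 2) * φ = π := by simp only [φ]; field_simp
  have h0 : sin ((1 + 1 / 2) * φ) = (2 * cos φ + 1) * sin ((0 + 1 / 2) * φ) := by
    have hcos := cos_two_mul (φ / 2)
    rw [show 2 * (φ / 2) = φ by ring] at hcos
    rw [show (1 + 1 / 2) * φ = 3 * (φ / 2) by ring, show (0 + 1 / 2) * φ = φ / 2 by ring,
      sin_three_mul, hcos]
    linear_combination (-4 * sin (φ / 2)) * sin_sq_add_cos_sq (φ / 2)
  refine ⟨fun j => sin ((j + 1 / 2) * φ), fun j hj => ?_, by simpa using h0, fun j => ?_, ?_⟩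
  · have hj' : (j : ℝ) ≤ n + 1 := by exact_mod_cast hj
    exact sin_pos_of_pos_of_lt_pi (by positivity) (by nlinarith)
  · push_cast
    rw [show ((j : ℝ) + 2 + 1 / 2) * φ = ((j + 1) + 1 / 2) * φ + φ by ring,
      show ((j : ℝ) + 1 / 2) * φ = ((j + 1) + 1 / 2) * φ - φ by ring, sin_add, sin_sub]
    ring
  · push_cast
    rw [show ((n : ℝ) + 1 / 2) * φ = π - (1 + 1 / 2) * φ by linarith,
      show ((n : ℝ) + 1 + 1 / 2) * φ = π - (0 + 1 / 2) * φ by linarith, sin_pi_sub, sin_pi_sub,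
      h0]

lemma sum_range_sub_sq_le (n : ℕ) (x : ℕ → ℝ) :
    ∑ i ∈ range n, (x i - x (i + 1)) ^ 2 ≤
      (2 + 2 * cos (π / (n + 1))) * ∑ i ∈ range (n + 1), x i ^ 2 := by
  cases n with
  | zero => simp
  | succ n =>
    obtain ⟨u, hpos, h0, hrec, hn⟩ := exists_path_weights n
    have hu : u (n + 1) ≠ 0 := (hpos (n + 1) le_rfl).ne'
    rw [Nat.cast_succ, add_assoc, one_add_one_eq_two]
    calc ∑ i ∈ range (n + 1), (x i - x (i + 1)) ^ 2
        ≤ ∑ i ∈ range (n + 1),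
            ((1 + u (i + 1) / u i) * x i ^ 2 + (1 + u i / u (i + 1)) * x (i + 1) ^ 2) :=
          sum_le_sum fun i hi => sub_sq_le_weighted (hpos i (by simp at hi; omega))
            (hpos (i + 1) (by simp at hi; omega))
      _ = (2 + 2 * cos (π / (n + 2))) * ∑ i ∈ range (n + 1 + 1), x i ^ 2 := by
          rw [sum_range_weighted_sq_eq h0 hrec n fun j hj => (hpos j hj).ne', hn,
            sum_range_succ (fun i => x i ^ 2) (n + 1)]
          field_simp
          ring

lemma two_sub_two_cos_mul_pi_div (M : ℕ) :
    2 - 2 * cos (M * π / (M + 1)) = 2 + 2 * cos (π / (M + 1)) := by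
  rw [show (M : ℝ) * π / (M + 1) = π - π / (M + 1) by field_simp; ring, cos_pi_sub]
  ring

lemma two_add_two_cos_pi_div_le_of_le {k M : ℕ} (h : k ≤ M) :
    2 + 2 * cos (π / (k + 1)) ≤ 2 + 2 * cos (π / (M + 1)) := by
  have h' : (k : ℝ) + 1 ≤ M + 1 := by exact_mod_cast Nat.succ_le_succ h
  have := cos_le_cos_of_nonneg_of_le_pi (by positivity)
    (div_le_self pi_pos.le (by linarith [(k.cast_nonneg : (0 : ℝ) ≤ k)]))
    (div_le_div_of_nonneg_left pi_pos.le (by positivity) h')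
  linarith

lemma two_add_two_cos_pi_div_pos {M : ℕ} (hM : 1 ≤ M) : 0 < 2 + 2 * cos (π / (M + 1)) := by
  have h : (2 : ℝ) ≤ M + 1 := by exact_mod_cast Nat.succ_le_succ hM
  have h0 : 0 ≤ π / (M + 1) := by positivity
  have := cos_nonneg_of_neg_pi_div_two_le_of_le (by linarith [pi_pos])
    (div_le_div_of_nonneg_left pi_pos.le two_pos h)
  linarith

section Incidence

variable {V E : Type*} [Fintype V] [DecidableEq V] {G : SimpleGraph V} {hd tl : E → V}
  {Q : Matrix E V ℝ}

lemma IsOrientedIncidence.mulVec_apply (hQ : IsOrientedIncidence G hd tl Q) (x : V → ℝ)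
    (e : E) : (Q *ᵥ x) e = x (hd e) - x (tl e) := by
  have hne : tl e ≠ hd e := (hQ.1 e).ne'
  simp [mulVec, dotProduct, hQ.2.2, ite_mul, sum_ite, filter_eq', filter_ne', hne,
    sub_eq_add_neg]

lemma IsOrientedIncidence.mulVec_apply_sq (hQ : IsOrientedIncidence G hd tl Q) {e : E}
    {a b : V} (he : s(hd e, tl e) = s(a, b)) (x : V → ℝ) : (Q *ᵥ x) e ^ 2 = (x a - x b) ^ 2 := by
  rw [hQ.mulVec_apply]
  rcases Sym2.eq_iff.mp he with ⟨rfl, rfl⟩ | ⟨rfl, rfl⟩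
  · rfl
  · ring

lemma IsOrientedIncidence.mulVec_const (hQ : IsOrientedIncidence G hd tl Q) (t : ℝ) :
    Q *ᵥ (fun _ => t) = 0 :=
  funext fun e => by rw [hQ.mulVec_apply, sub_self, Pi.zero_apply]

lemma IsOrientedIncidence.eq_of_mulVec_eq_zero (hQ : IsOrientedIncidence G hd tl Q)
    (hG : G.Connected) {x : V → ℝ} (hx : Q *ᵥ x = 0) (a b : V) : x a = x b := by
  have hadj : ∀ a b, G.Adj a b → x a = x b := by
    intro a b hab
    obtain ⟨e, he, -⟩ := hQ.2.1 a b hab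
    have hxe : (Q *ᵥ x) e ^ 2 = 0 := by rw [hx, Pi.zero_apply, sq, mul_zero]
    rw [hQ.mulVec_apply_sq he, sq_eq_zero_iff, sub_eq_zero] at hxe
    exact hxe
  obtain ⟨w⟩ := hG.preconnected a b
  induction w with
  | nil => rfl
  | cons h _ ih => exact (hadj _ _ h).trans ih

lemma IsOrientedIncidence.lambdaMinPos_mul_dotProduct_le_of_sum_eq_zero [Fintype E]
    (hQ : IsOrientedIncidence G hd tl Q) (hG : G.Connected) {y : V → ℝ} (hy : ∑ v, y v = 0) :
    lambdaMinPos (Qᵀ * Q) * (y ⬝ᵥ y) ≤ (Q *ᵥ y) ⬝ᵥ (Q *ᵥ y) := by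
  refine lambdaMinPos_mul_dotProduct_le Q fun z hz => ?_
  obtain ⟨a⟩ := hG.nonempty
  have hza : z = fun _ => z a := funext fun b => hQ.eq_of_mulVec_eq_zero hG hz b a
  rw [hza, dotProduct, ← mul_sum, hy, mul_zero]

end Incidence

section PathBlock

variable {V E : Type*} [Fintype V] [DecidableEq V] {G : SimpleGraph V} {hd tl : E → V}
  {Q : Matrix E V ℝ} {τ : Finset E} {k : ℕ} {v : Fin (k + 1) → V} {φ : Fin k → E}

lemma sum_fin_sub_sq_le (w : Fin (k + 1) → ℝ) :
    ∑ i : Fin k, (w i.castSucc - w i.succ) ^ 2 ≤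
      (2 + 2 * cos (π / (k + 1))) * ∑ m, w m ^ 2 := by
  set z : ℕ → ℝ := fun m => if h : m < k + 1 then w ⟨m, h⟩ else 0
  have hz : ∀ m : Fin (k + 1), z m = w m := fun m => dif_pos m.2
  have := sum_range_sub_sq_le k z
  rw [← Fin.sum_univ_eq_sum_range (fun i => (z i - z (i + 1)) ^ 2),
    ← Fin.sum_univ_eq_sum_range (fun i => z i ^ 2)] at this
  convert this using 3 with i _ m
  · rw [← hz, ← hz, Fin.val_castSucc, Fin.val_succ]
  · rw [hz]

lemma sum_finset_coe_eq_sum_fin {R : Type*} [AddCommMonoid R] (hφ : Function.Injective φ)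
    (hmem : ∀ e, e ∈ τ ↔ ∃ i, φ i = e) (f : τ → R) :
    ∑ e, f e = ∑ i, f ⟨φ i, (hmem _).2 ⟨i, rfl⟩⟩ := by
  refine (Equiv.sum_comp (Equiv.ofBijective _ ⟨fun i j h => hφ (congrArg Subtype.val h),
    fun e => ?_⟩) f).symm
  obtain ⟨i, hi⟩ := (hmem e).1 e.2
  exact ⟨i, Subtype.ext hi⟩

lemma IsOrientedIncidence.injective_vecMul_rowSub (hQ : IsOrientedIncidence G hd tl Q)
    (hτ : IsPathBlock hd tl τ) : Function.Injective (rowSub Q τ).vecMul := by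
  obtain ⟨k, v, φ, hv, hφ, hmem, hends⟩ := hτ
  suffices h : ∀ w : τ → ℝ, w ᵥ* rowSub Q τ = 0 → ∀ j, w ⟨φ j, (hmem _).2 ⟨j, rfl⟩⟩ = 0 by
    intro a b hab
    have hab' := h (a - b) (by rw [sub_vecMul]; exact sub_eq_zero.2 hab)
    funext e
    obtain ⟨j, hj⟩ := (hmem e).1 e.2
    rw [← sub_eq_zero, ← Pi.sub_apply,
      show e = ⟨φ j, (hmem _).2 ⟨j, rfl⟩⟩ from Subtype.ext hj.symm, hab']
  intro w hw j
  -- Against the indicator `y` of `v 0, …, v j`, only the edge `φ j` has a nonzero difference.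
  set y : V → ℝ := fun x => if x ∈ (univ.filter (· ≤ j.castSucc)).image v then 1 else 0
  have hy : ∀ m, y (v m) = if m ≤ j.castSucc then 1 else 0 := fun m => by
    simp only [y, hv.mem_finset_image, mem_filter, mem_univ, true_and]
  have hQy : ∀ i, (Q *ᵥ y) (φ i) ^ 2 = if i = j then 1 else 0 := by
    intro i
    rw [hQ.mulVec_apply_sq (hends i), hy, hy]
    simp only [Fin.le_iff_val_le_val, Fin.val_castSucc, Fin.val_succ, Fin.ext_iff]
    split_ifs <;> first | omega | norm_num
  have h0 : ∑ i, w ⟨φ i, (hmem _).2 ⟨i, rfl⟩⟩ * (Q *ᵥ y) (φ i) = 0 := by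
    rw [← sum_finset_coe_eq_sum_fin hφ hmem fun e => w e * (Q *ᵥ y) e]
    rw [← zero_dotProduct y, ← hw, ← dotProduct_mulVec]
    rfl
  rw [sum_eq_single j] at h0
  · refine (mul_eq_zero.1 h0).resolve_right fun hj => ?_
    simpa [hj] using hQy j
  · exact fun i _ hij => mul_eq_zero_of_right _ (by simpa [hij] using hQy i)
  · simp

lemma IsOrientedIncidence.rowSub_mulVec_dotProduct_le (hQ : IsOrientedIncidence G hd tl Q)
    (hτ : IsPathBlock hd tl τ) (x : V → ℝ) :
    (rowSub Q τ *ᵥ x) ⬝ᵥ (rowSub Q τ *ᵥ x) ≤ (2 + 2 * cos (π / (#τ + 1))) * (x ⬝ᵥ x) := by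
  obtain ⟨k, v, φ, hv, hφ, hmem, hends⟩ := hτ
  have hτφ : τ = univ.map ⟨φ, hφ⟩ := by
    ext e
    simp [hmem]
  have hβ : 0 ≤ 2 + 2 * cos (π / (k + 1)) := by linarith [neg_one_le_cos (π / (k + 1))]
  rw [hτφ, card_map, card_univ, Fintype.card_fin, ← hτφ]
  calc (rowSub Q τ *ᵥ x) ⬝ᵥ (rowSub Q τ *ᵥ x)
      = ∑ i : Fin k, (x (v i.castSucc) - x (v i.succ)) ^ 2 := by
        simp only [dotProduct, rowSub_mulVec_apply, ← sq, sum_finset_coe_eq_sum_fin hφ hmem,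
          hQ.mulVec_apply_sq (hends _)]
    _ ≤ (2 + 2 * cos (π / (k + 1))) * ∑ m, x (v m) ^ 2 := sum_fin_sub_sq_le (x ∘ v)
    _ ≤ (2 + 2 * cos (π / (k + 1))) * (x ⬝ᵥ x) := by
        refine mul_le_mul_of_nonneg_left ?_ hβ
        simp only [dotProduct, ← sq]
        exact (sum_map univ ⟨v, hv⟩ fun w => x w ^ 2).symm.trans_le <|
          sum_le_sum_of_subset_of_nonneg (subset_univ _) fun _ _ _ => sq_nonneg _

end PathBlock

section Gossip

variable {V E : Type*} [Fintype V] [DecidableEq V] [Fintype E] {G : SimpleGraph V}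
  {hd tl : E → V} {Q : Matrix E V ℝ} {d : ℕ} {τs : Fin d → Finset E}

lemma IsOrientedIncidence.sum_kaczStep_apply (hQ : IsOrientedIncidence G hd tl Q)
    {τ : Finset E} (hτ : IsPathBlock hd tl τ) (x : V → ℝ) :
    ∑ v, kaczStep Q 0 τ x v = ∑ v, x v := by
  have h := dotProduct_kaczStep_zero (hQ.injective_vecMul_rowSub hτ) (z := 1)
    (hQ.mulVec_const 1) x
  rwa [one_dotProduct, one_dotProduct] at h

lemma IsOrientedIncidence.sum_dotProduct_kaczStep_le [DecidableEq E]
    (hQ : IsOrientedIncidence G hd tl Q) (hG : G.Connected)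
    (hpath : ∀ l, IsPathBlock hd tl (τs l))
    {M : ℕ} (hM : ∀ l, #(τs l) ≤ M) (hM₁ : 1 ≤ M) {r : ℕ} (hr : ∀ e, r ≤ #{l | e ∈ τs l})
    {y : V → ℝ} (hy : ∑ v, y v = 0) :
    ∑ l, kaczStep Q 0 (τs l) y ⬝ᵥ kaczStep Q 0 (τs l) y ≤
      (d - r * lambdaMinPos (Qᵀ * Q) / (2 + 2 * cos (π / (M + 1)))) * (y ⬝ᵥ y) :=
  sum_dotProduct_kaczStep_zero_le Q τs (fun l => hQ.injective_vecMul_rowSub (hpath l))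
    (two_add_two_cos_pi_div_pos hM₁)
    (fun l z => (hQ.rowSub_mulVec_dotProduct_le (hpath l) z).trans <|
      mul_le_mul_of_nonneg_right (two_add_two_cos_pi_div_le_of_le (hM l))
        (dotProduct_self_nonneg z))
    hr (hQ.lambdaMinPos_mul_dotProduct_le_of_sum_eq_zero hG hy)

lemma IsOrientedIncidence.nonneg_of_sum_dotProduct_kaczStep_le
    (hQ : IsOrientedIncidence G hd tl Q) (e : E) {ρ : ℝ}
    (hρ : ∀ y : V → ℝ, ∑ v, y v = 0 →
      ∑ l, kaczStep Q 0 (τs l) y ⬝ᵥ kaczStep Q 0 (τs l) y ≤ ρ * (y ⬝ᵥ y)) : 0 ≤ ρ := by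
  have hrow : ∑ v, Q e v = 0 := by
    simpa [mulVec, dotProduct] using congrFun (hQ.mulVec_const 1) e
  have hrow_pos : 0 < Q e ⬝ᵥ Q e := by
    refine (dotProduct_self_nonneg (Q e)).lt_of_ne' fun h => ?_
    have h1 := congrFun (dotProduct_self_eq_zero.1 h) (hd e)
    rw [hQ.2.2, if_pos rfl] at h1
    exact one_ne_zero h1
  refine le_of_mul_le_mul_right ?_ hrow_pos
  rw [zero_mul]
  exact (sum_nonneg fun l _ => dotProduct_self_nonneg _).trans (hρ _ hrow)

lemma IsOrientedIncidence.sum_sqNorm_kaczIter_sub_mean_le (hQ : IsOrientedIncidence G hd tl Q)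
    (hpath : ∀ l, IsPathBlock hd tl (τs l)) {c cstar : V → ℝ}
    (hcstar : cstar = fun _ => (∑ v, c v) / (Fintype.card V : ℝ)) {ρ : ℝ} (hρ₀ : 0 ≤ ρ)
    (hρ : ∀ y : V → ℝ, ∑ v, y v = 0 →
      ∑ l, kaczStep Q 0 (τs l) y ⬝ᵥ kaczStep Q 0 (τs l) y ≤ ρ * (y ⬝ᵥ y)) (k : ℕ) :
    ∑ σ : Fin k → Fin d, sqNorm (kaczIter Q 0 τs c k σ - cstar) ≤
      ρ ^ k * sqNorm (c - cstar) := by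
  have hcstar_ker : Q *ᵥ cstar = 0 := hcstar ▸ hQ.mulVec_const _
  have hsum_cstar : ∑ v, cstar v = ∑ v, c v := by
    rcases isEmpty_or_nonempty V with _ | _
    · simp
    rw [hcstar, sum_const, card_univ, nsmul_eq_mul]
    field_simp
  refine sum_kaczIter_le_pow Q 0 τs (S := {x | ∑ v, x v = ∑ v, c v})
    (f := (sqNorm <| · - cstar)) rfl
    (fun l x hx => (hQ.sum_kaczStep_apply (hpath l) x).trans hx) hρ₀ (fun x hx => ?_) k
  simp only [sqNorm_eq_dotProduct, kaczStep_zero_sub hcstar_ker]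
  exact hρ _ (by simp [sum_sub_distrib, hsum_cstar, hx.out])

end Gossip

open Real in
theorem block_gossip_path_blocks_general {V E : Type*} [Fintype V] [DecidableEq V]
    [Fintype E] [DecidableEq E] {d : ℕ}
    (G : SimpleGraph V) (hG : G.Connected)
    (hd tl : E → V) (Q : Matrix E V ℝ) (hQ : IsOrientedIncidence G hd tl Q)
    (τs : Fin d → Finset E)
    (hcover : ∀ e : E, ∃ l, e ∈ τs l)
    (hpath : ∀ l, IsPathBlock hd tl (τs l))
    (M : ℕ) (hM_le : ∀ l, (τs l).card ≤ M)
    (r : ℕ)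
    (hr_le : ∀ e : E, r ≤ (Finset.univ.filter fun l => e ∈ τs l).card)
    (hr_att : ∃ e : E, (Finset.univ.filter fun l => e ∈ τs l).card = r)
    (c cstar : V → ℝ)
    (hcstar : cstar = fun _ => (∑ v, c v) / (Fintype.card V : ℝ)) :
    ∀ k : ℕ,
      (∑ σ : Fin k → Fin d, sqNorm (kaczIter Q 0 τs c k σ - cstar)) / (d : ℝ) ^ k ≤
        (1 - (r : ℝ) * lambdaMinPos (Qᵀ * Q) /
            ((2 - 2 * Real.cos (M * π / (M + 1))) * d)) ^ k * sqNorm (c - cstar) ∧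
      (1 - (r : ℝ) * lambdaMinPos (Qᵀ * Q) /
            ((2 - 2 * Real.cos (M * π / (M + 1))) * d)) ^ k * sqNorm (c - cstar) ≤
        (1 - (r : ℝ) * lambdaMinPos (Qᵀ * Q) / (4 * d)) ^ k * sqNorm (c - cstar) := by
  obtain ⟨e₀, -⟩ := hr_att
  obtain ⟨l₀, he₀⟩ := hcover e₀
  have hd_pos : (0 : ℝ) < d := by exact_mod_cast l₀.pos
  have hM₁ : 1 ≤ M := (card_pos.2 ⟨e₀, he₀⟩).trans_le (hM_le l₀)
  have hβ := two_add_two_cos_pi_div_pos hM₁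
  have hcontr := fun y => hQ.sum_dotProduct_kaczStep_le hG hpath hM_le hM₁ hr_le (y := y)
  have hρ := hQ.nonneg_of_sum_dotProduct_kaczStep_le e₀ hcontr
  have hρ_eq : (d : ℝ) - r * lambdaMinPos (Qᵀ * Q) / (2 + 2 * cos (π / (M + 1))) =
      d * (1 - r * lambdaMinPos (Qᵀ * Q) / ((2 + 2 * cos (π / (M + 1))) * d)) := by
    field_simp
  rw [hρ_eq] at hcontr hρ
  have key := hQ.sum_sqNorm_kaczIter_sub_mean_le hpath hcstar hρ hcontr
  intro k
  rw [two_sub_two_cos_mul_pi_div]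
  refine ⟨?_, mul_le_mul_of_nonneg_right (pow_le_pow_left₀ ?_ ?_ k) ?_⟩
  · rw [div_le_iff₀ (pow_pos hd_pos k)]
    exact (key k).trans_eq (by rw [mul_pow]; ring)
  · exact (mul_nonneg_iff_of_pos_left hd_pos).1 hρ
  · have hβ4 : 2 + 2 * cos (π / (M + 1)) ≤ 4 := by linarith [cos_le_one (π / (M + 1))]
    have hα : 0 ≤ r * lambdaMinPos (Qᵀ * Q) :=
      mul_nonneg r.cast_nonneg (lambdaMinPos_transpose_mul_self_nonneg Q)
    gcongr
  · rw [sqNorm_eq_dotProduct]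
    exact dotProduct_self_nonneg _

open Real in
/-- **Corollary (block gossip with path blocks).** If `G` is connected with oriented
incidence matrix `Q` and `T = (τ_1, …, τ_d)` is a covering of the edges of `G` by blocks
inducing path subgraphs, with `M = max_i |τ_i|` and `r` the minimum number of blocks
containing any single edge, then block gossip (expectation = average over all uniform
i.i.d. block choice sequences) satisfies
`E‖c_k − c*‖² ≤ (1 − r α(G)/((2 − 2 cos(Mπ/(M+1))) d))ᵏ ‖c − c*‖²
  ≤ (1 − r α(G)/(4d))ᵏ ‖c − c*‖²`,
where `c* = mean(c)·1` and the algebraic connectivity `α(G)` is the smallest nonzero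
eigenvalue of `L = QᵀQ`. -/
theorem block_gossip_path_blocks {V E : Type*} [Fintype V] [DecidableEq V]
    [Fintype E] [DecidableEq E] {d : ℕ}
    (G : SimpleGraph V) (hG : G.Connected)
    (hd tl : E → V) (Q : Matrix E V ℝ) (hQ : IsOrientedIncidence G hd tl Q)
    (τs : Fin d → Finset E)
    (hcover : ∀ e : E, ∃ l, e ∈ τs l)
    (hpath : ∀ l, IsPathBlock hd tl (τs l))
    (M : ℕ) (hM_le : ∀ l, (τs l).card ≤ M) (hM_att : ∃ l, (τs l).card = M)
    (r : ℕ)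
    (hr_le : ∀ e : E, r ≤ (Finset.univ.filter fun l => e ∈ τs l).card)
    (hr_att : ∃ e : E, (Finset.univ.filter fun l => e ∈ τs l).card = r)
    (c cstar : V → ℝ)
    (hcstar : cstar = fun _ => (∑ v, c v) / (Fintype.card V : ℝ)) :
    ∀ k : ℕ,
      (∑ σ : Fin k → Fin d, sqNorm (kaczIter Q 0 τs c k σ - cstar)) / (d : ℝ) ^ k ≤
        (1 - (r : ℝ) * lambdaMinPos (Qᵀ * Q) /
            ((2 - 2 * Real.cos (M * π / (M + 1))) * d)) ^ k * sqNorm (c - cstar) ∧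
      (1 - (r : ℝ) * lambdaMinPos (Qᵀ * Q) /
            ((2 - 2 * Real.cos (M * π / (M + 1))) * d)) ^ k * sqNorm (c - cstar) ≤
        (1 - (r : ℝ) * lambdaMinPos (Qᵀ * Q) / (4 * d)) ^ k * sqNorm (c - cstar) :=
  block_gossip_path_blocks_general G hG hd tl Q hQ τs hcover hpath M hM_le r hr_le hr_att c cstar
    hcstar

end
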